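/- arXiv:2307.14085 — 5 statements merged into one kernel-verified Lean document; each statement's English description precedes it below -/
import Mathlib

section
/- Performance difference lemma. Fix a leader policy π and let ν = ν^π be its quantal response. Let ν̃ = (ν̃_h)_{h=1}^H with ν̃_h : S → Δ(B) be arbitrary, and let Ũ_h : S×A×B → ℝ and W̃_h : S → ℝ (h = 1,…,H) be arbitrary functions with ‖Ũ_h‖_∞ ≤ H for all h; adopt the conventions Ũ_{H+1} ≡ 0 and W̃_{H+1} ≡ 0. For a follower policy μ define (T_h^{π,μ} f)(s) = Σ_{a,b} π_h(a|s,b)·μ_h(b|s)·f(s,a,b) for f : S×A×B → ℝ. Then: (i) E_{s₁∼ρ₀}[(T₁^{π,ν̃} Ũ₁)(s₁)] − J(π) ≤ Σ_{h=1}^H E^{π,ν}[ (Ũ_h − u_h)(s_h,a_h,b_h) − (T_{h+1}^{π,ν̃} Ũ_{h+1})(s_{h+1}) ] + Σ_{h=1}^H H·E^{π,ν}[ ‖(ν̃_h − ν_h)(·|s_h)‖₁ ]; and (ii) E_{s₁∼ρ₀}[W̃₁(s₁)] − J(π) ≤ Σ_{h=1}^H E^{π,ν}[ (Ũ_h − u_h)(s_h,a_h,b_h)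 − W̃_{h+1}(s_{h+1}) ] + Σ_{h=1}^H E^{π,ν}[ W̃_h(s_h) − (T_h^{π,ν̃} Ũ_h)(s_h) ] + Σ_{h=1}^H H·E^{π,ν}[ ‖(ν̃_h − ν_h)(·|s_h)‖₁ ]. -/
open Finset

noncomputable section

namespace QSE

variable {S A B : Type}

/-- Follower reward under the leader policy: `r_h^π(s,b) = Σ_a π_h(a|s,b) r_h(s,a,b)`. -/
def rPol [Fintype A] (pol : ℕ → S → B → A → ℝ) (r : ℕ → S → A → B → ℝ)
    (h : ℕ) (s : S) (b : B) : ℝ :=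
  ∑ a, pol h s b a * r h s a b

/-- Transition under the leader policy: `P_h^π(s'|s,b) = Σ_a π_h(a|s,b) P_h(s'|s,a,b)`. -/
def pPol [Fintype A] (pol : ℕ → S → B → A → ℝ) (P : ℕ → S → A → B → S → ℝ)
    (h : ℕ) (s : S) (b : B) (s' : S) : ℝ :=
  ∑ a, pol h s b a * P h s a b s'

/-- Fuel-indexed soft state value: `vAux n = V_{H−n}^π` (steps are 0-based, `V_H ≡ 0`). -/
def vAux [Fintype S] [Fintype A] [Fintype B] (η γ : ℝ) (H : ℕ)
    (pol : ℕ → S → B → A → ℝ) (r : ℕ → S → A → B → ℝ)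
    (P : ℕ → S → A → B → S → ℝ) : ℕ → S → ℝ
  | 0, _ => 0
  | n + 1, s =>
      η⁻¹ * Real.log (∑ b, Real.exp (η * (rPol pol r (H - (n + 1)) s b +
        γ * ∑ s', pPol pol P (H - (n + 1)) s b s' * vAux η γ H pol r P n s')))

/-- Follower soft state value `V_h^π` (0-based step `h`, so `V_H ≡ 0`). -/
def softV [Fintype S] [Fintype A] [Fintype B] (η γ : ℝ) (H : ℕ)
    (pol : ℕ → S → B → A → ℝ) (r : ℕ → S → A → B → ℝ)
    (P : ℕ → S → A → B → S → ℝ) (h : ℕ) (s : S) : ℝ :=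
  vAux η γ H pol r P (H - h) s

/-- Follower soft action value `Q_h^π(s,b) = r_h^π(s,b) + γ Σ_{s'} P_h^π(s'|s,b) V_{h+1}^π(s')`. -/
def softQ [Fintype S] [Fintype A] [Fintype B] (η γ : ℝ) (H : ℕ)
    (pol : ℕ → S → B → A → ℝ) (r : ℕ → S → A → B → ℝ)
    (P : ℕ → S → A → B → S → ℝ) (h : ℕ) (s : S) (b : B) : ℝ :=
  rPol pol r h s b + γ * ∑ s', pPol pol P h s b s' * softV η γ H pol r P (h + 1) s'

/-- Follower advantage `A_h^π = Q_h^π − V_h^π`. -/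
def softA [Fintype S] [Fintype A] [Fintype B] (η γ : ℝ) (H : ℕ)
    (pol : ℕ → S → B → A → ℝ) (r : ℕ → S → A → B → ℝ)
    (P : ℕ → S → A → B → S → ℝ) (h : ℕ) (s : S) (b : B) : ℝ :=
  softQ η γ H pol r P h s b - softV η γ H pol r P h s

/-- Quantal response `ν_h^π(b|s) = exp(η A_h^π(s,b))`. -/
def qr [Fintype S] [Fintype A] [Fintype B] (η γ : ℝ) (H : ℕ)
    (pol : ℕ → S → B → A → ℝ) (r : ℕ → S → A → B → ℝ)
    (P : ℕ → S → A → B → S → ℝ) (h : ℕ) (s : S) (b : B) : ℝ :=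
  Real.exp (η * softA η γ H pol r P h s b)

/-- Marginal law of the state `s_h` along the trajectory generated by `(ρ₀, ν, π, P)`. -/
def margS [Fintype S] [Fintype A] [Fintype B] (rho0 : S → ℝ)
    (pol : ℕ → S → B → A → ℝ) (nu : ℕ → S → B → ℝ)
    (P : ℕ → S → A → B → S → ℝ) : ℕ → S → ℝ
  | 0, s => rho0 s
  | h + 1, s' => ∑ s, ∑ b, ∑ a,
      margS rho0 pol nu P h s * nu h s b * pol h s b a * P h s a b s'

/-- Integral operator `(T_h^{π,ν} f)(s) = Σ_{a,b} π_h(a|s,b) ν_h(b|s) f(s,a,b)`. -/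
def Top [Fintype A] [Fintype B] (pol : ℕ → S → B → A → ℝ) (nu : ℕ → S → B → ℝ)
    (h : ℕ) (f : S → A → B → ℝ) (s : S) : ℝ :=
  ∑ b, ∑ a, nu h s b * pol h s b a * f s a b

/-- Leader's value `J(π) = E^{π,ν^π}[Σ_{h<H} u_h(s_h,a_h,b_h)]`. -/
def Jval [Fintype S] [Fintype A] [Fintype B] (η γ : ℝ) (H : ℕ) (rho0 : S → ℝ)
    (pol : ℕ → S → B → A → ℝ) (r : ℕ → S → A → B → ℝ)
    (P : ℕ → S → A → B → S → ℝ) (u : ℕ → S → A → B → ℝ) : ℝ :=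
  ∑ h ∈ Finset.range H, ∑ s, ∑ b, ∑ a,
    margS rho0 pol (qr η γ H pol r P) P h s * qr η γ H pol r P h s b *
      pol h s b a * u h s a b

end QSE

open QSE

/-- Auxiliary: the performance difference bound with an arbitrary terminal-zero
state estimate `Wt`. -/
lemma pd_aux {S A B : Type} [Fintype S] [Fintype A] [Fintype B]
    (H : ℕ) (η γ : ℝ)
    (rho0 : S → ℝ) (hrho0 : ∀ s, 0 ≤ rho0 s)
    (P : ℕ → S → A → B → S → ℝ)
    (hP0 : ∀ h < H, ∀ s a b s', 0 ≤ P h s a b s')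
    (hP1 : ∀ h < H, ∀ s a b, ∑ s', P h s a b s' = 1)
    (u : ℕ → S → A → B → ℝ)
    (r : ℕ → S → A → B → ℝ)
    (pol : ℕ → S → B → A → ℝ)
    (hpol0 : ∀ h < H, ∀ s b a, 0 ≤ pol h s b a)
    (hpol1 : ∀ h < H, ∀ s b, ∑ a, pol h s b a = 1)
    (nt : ℕ → S → B → ℝ)
    (Ut : ℕ → S → A → B → ℝ)
    (hUt : ∀ h < H, ∀ s a b, |Ut h s a b| ≤ (H : ℝ))
    (Wt : ℕ → S → ℝ) (hWend : ∀ s, Wt H s = 0) :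
    (∑ s, rho0 s * Wt 0 s) - Jval η γ H rho0 pol r P u ≤
      (∑ h ∈ Finset.range H, ∑ s, ∑ b, ∑ a, ∑ s',
        margS rho0 pol (qr η γ H pol r P) P h s * qr η γ H pol r P h s b *
          pol h s b a * P h s a b s' *
          ((Ut h s a b - u h s a b) - Wt (h + 1) s')) +
      (∑ h ∈ Finset.range H, ∑ s,
        margS rho0 pol (qr η γ H pol r P) P h s *
          (Wt h s - Top pol nt h (Ut h) s)) +
      (∑ h ∈ Finset.range H, (H : ℝ) * ∑ s,
        margS rho0 pol (qr η γ H pol r P) P h s *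
          ∑ b, |nt h s b - qr η γ H pol r P h s b|) := by
  simp only [Jval]
  set ν := qr η γ H pol r P with hν
  set d := margS rho0 pol ν P with hd
  have hν0 : ∀ h s b, 0 ≤ ν h s b := by
    intro h s b; rw [hν]; simp only [qr]; exact (Real.exp_pos _).le
  have hd0 : ∀ h, h ≤ H → ∀ s, 0 ≤ d h s := by
    intro h
    induction h with
    | zero => intro _ s; exact hrho0 s
    | succ n ih =>
      intro hn s'
      have hnH : n < H := lt_of_lt_of_le (Nat.lt_succ_self n) hn
      have ihn := ih (le_of_lt hnH)
      rw [hd]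
      show 0 ≤ ∑ s, ∑ b, ∑ a, margS rho0 pol ν P n s * ν n s b * pol n s b a * P n s a b s'
      refine Finset.sum_nonneg fun s _ => Finset.sum_nonneg fun b _ =>
        Finset.sum_nonneg fun a _ => ?_
      have h1 : 0 ≤ margS rho0 pol ν P n s := hd ▸ ihn s
      exact mul_nonneg (mul_nonneg (mul_nonneg h1 (hν0 n s b)) (hpol0 n hnH s b a))
        (hP0 n hnH s a b s')
  have swapBA : ∀ (g : B → A → S → ℝ),
      (∑ b, ∑ a, ∑ s', g b a s') = ∑ s', ∑ b, ∑ a, g b a s' := by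
    intro g
    calc (∑ b, ∑ a, ∑ s', g b a s') = ∑ b, ∑ s', ∑ a, g b a s' :=
          Finset.sum_congr rfl fun b _ => Finset.sum_comm
      _ = ∑ s', ∑ b, ∑ a, g b a s' := Finset.sum_comm
  have swap4 : ∀ (f : S → B → A → S → ℝ),
      (∑ s, ∑ b, ∑ a, ∑ s', f s b a s') = ∑ s', ∑ s, ∑ b, ∑ a, f s b a s' := by
    intro f
    calc (∑ s, ∑ b, ∑ a, ∑ s', f s b a s') = ∑ s, ∑ s', ∑ b, ∑ a, f s b a s' :=
          Finset.sum_congr rfl fun s _ => swapBA _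
      _ = ∑ s', ∑ s, ∑ b, ∑ a, f s b a s' := Finset.sum_comm
  have tel : (∑ s, rho0 s * Wt 0 s) =
      ∑ h ∈ Finset.range H,
        ((∑ s, d h s * Wt h s) - (∑ s, d (h + 1) s * Wt (h + 1) s)) := by
    rw [Finset.sum_range_sub' (fun h => ∑ s, d h s * Wt h s)]
    simp [hd, margS, hWend]
  rw [tel, ← Finset.sum_sub_distrib, ← Finset.sum_add_distrib, ← Finset.sum_add_distrib]
  refine Finset.sum_le_sum fun h hh => ?_
  have hhH : h < H := Finset.mem_range.mp hh
  -- the recursion identity for the state marginal, paired with Wt (h+1)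
  have hrec : (∑ s, ∑ b, ∑ a, ∑ s',
        d h s * ν h s b * pol h s b a * P h s a b s' * Wt (h + 1) s')
      = ∑ s', d (h + 1) s' * Wt (h + 1) s' := by
    rw [swap4]
    refine Finset.sum_congr rfl fun s' _ => ?_
    rw [hd]
    show _ = (∑ s, ∑ b, ∑ a, margS rho0 pol ν P h s * ν h s b * pol h s b a * P h s a b s')
        * Wt (h + 1) s'
    simp only [Finset.sum_mul]
  -- splitting the transition-weighted sum
  have hA : (∑ s, ∑ b, ∑ a, ∑ s',
        d h s * ν h s b * pol h s b a * P h s a b s' *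
          ((Ut h s a b - u h s a b) - Wt (h + 1) s'))
      = (∑ s, ∑ b, ∑ a, d h s * ν h s b * pol h s b a * Ut h s a b)
        - (∑ s, ∑ b, ∑ a, d h s * ν h s b * pol h s b a * u h s a b)
        - (∑ s', d (h + 1) s' * Wt (h + 1) s') := by
    rw [← hrec]
    simp only [← Finset.sum_sub_distrib]
    refine Finset.sum_congr rfl fun s _ => Finset.sum_congr rfl fun b _ =>
      Finset.sum_congr rfl fun a _ => ?_
    have e1 : ∀ s', d h s * ν h s b * pol h s b a * P h s a b s' *
          ((Ut h s a b - u h s a b) - Wt (h + 1) s')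
        = d h s * ν h s b * pol h s b a * P h s a b s' * (Ut h s a b - u h s a b)
          - d h s * ν h s b * pol h s b a * P h s a b s' * Wt (h + 1) s' := fun s' => by ring
    rw [Finset.sum_congr rfl fun s' _ => e1 s', Finset.sum_sub_distrib]
    have e2 : (∑ s', d h s * ν h s b * pol h s b a * P h s a b s' *
          (Ut h s a b - u h s a b))
        = (d h s * ν h s b * pol h s b a * (Ut h s a b - u h s a b)) *
            ∑ s', P h s a b s' := by
      rw [Finset.mul_sum]
      exact Finset.sum_congr rfl fun s' _ => by ring
    rw [e2, hP1 h hhH s a b, mul_one]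
    ring
  -- Top with the quantal response
  have hTν : (∑ s, ∑ b, ∑ a, d h s * ν h s b * pol h s b a * Ut h s a b)
      = ∑ s, d h s * Top pol ν h (Ut h) s := by
    refine Finset.sum_congr rfl fun s _ => ?_
    simp only [QSE.Top, Finset.mul_sum]
    exact Finset.sum_congr rfl fun b _ => Finset.sum_congr rfl fun a _ => by ring
  -- the key estimate
  have main : (∑ s, d h s * Top pol nt h (Ut h) s)
      ≤ (∑ s, ∑ b, ∑ a, d h s * ν h s b * pol h s b a * Ut h s a b)
        + (H : ℝ) * ∑ s, d h s * ∑ b, |nt h s b - ν h s b| := by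
    rw [hTν, Finset.mul_sum, ← Finset.sum_add_distrib]
    refine Finset.sum_le_sum fun s _ => ?_
    have hdn : 0 ≤ d h s := hd0 h (le_of_lt hhH) s
    have hg : ∀ b, |∑ a, pol h s b a * Ut h s a b| ≤ (H : ℝ) := by
      intro b
      calc |∑ a, pol h s b a * Ut h s a b| ≤ ∑ a, |pol h s b a * Ut h s a b| :=
            Finset.abs_sum_le_sum_abs _ _
        _ ≤ ∑ a, pol h s b a * (H : ℝ) := by
            refine Finset.sum_le_sum fun a _ => ?_
            rw [abs_mul, abs_of_nonneg (hpol0 h hhH s b a)]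
            exact mul_le_mul_of_nonneg_left (hUt h hhH s a b) (hpol0 h hhH s b a)
        _ = (H : ℝ) := by rw [← Finset.sum_mul, hpol1 h hhH s b, one_mul]
    have hTbound : Top pol nt h (Ut h) s - Top pol ν h (Ut h) s
        ≤ (H : ℝ) * ∑ b, |nt h s b - ν h s b| := by
      simp only [QSE.Top]
      rw [← Finset.sum_sub_distrib, Finset.mul_sum]
      refine Finset.sum_le_sum fun b _ => ?_
      have e1 : (∑ a, nt h s b * pol h s b a * Ut h s a b)
            - (∑ a, ν h s b * pol h s b a * Ut h s a b)
          = (nt h s b - ν h s b) * ∑ a, pol h s b a * Ut h s a b := by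
        rw [Finset.mul_sum, ← Finset.sum_sub_distrib]
        exact Finset.sum_congr rfl fun a _ => by ring
      rw [e1]
      calc (nt h s b - ν h s b) * ∑ a, pol h s b a * Ut h s a b
          ≤ |(nt h s b - ν h s b) * ∑ a, pol h s b a * Ut h s a b| := le_abs_self _
        _ = |nt h s b - ν h s b| * |∑ a, pol h s b a * Ut h s a b| := abs_mul _ _
        _ ≤ |nt h s b - ν h s b| * (H : ℝ) :=
            mul_le_mul_of_nonneg_left (hg b) (abs_nonneg _)
        _ = (H : ℝ) * |nt h s b - ν h s b| := mul_comm _ _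
    have h2 := mul_le_mul_of_nonneg_left hTbound hdn
    nlinarith [h2]
  -- splitting the middle term
  have hB : (∑ s, d h s * (Wt h s - Top pol nt h (Ut h) s))
      = (∑ s, d h s * Wt h s) - ∑ s, d h s * Top pol nt h (Ut h) s := by
    rw [← Finset.sum_sub_distrib]
    exact Finset.sum_congr rfl fun s _ => by ring
  linarith [main, hA, hB]


/-- Performance difference lemma for the quantal Stackelberg game.  Steps are 0-based:
step `h ∈ {0,…,H−1}` corresponds to step `h+1` of the paper, and index `H` plays the
role of `H+1` (so `Ũ_H ≡ 0`, `W̃_H ≡ 0` encode the conventions `Ũ_{H+1} ≡ 0`,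
`W̃_{H+1} ≡ 0`).  With `ν = ν^π` the quantal response of `π`:
(i)  `E_{s₁∼ρ₀}[(T₀^{π,ν̃}Ũ₀)(s₁)] − J(π) ≤ Σ_h E^{π,ν}[(Ũ_h − u_h)(s_h,a_h,b_h) −
(T_{h+1}^{π,ν̃}Ũ_{h+1})(s_{h+1})] + Σ_h H·E^{π,ν}[‖(ν̃_h − ν_h)(·|s_h)‖₁]`, and
(ii) `E_{s₁∼ρ₀}[W̃₀(s₁)] − J(π) ≤ Σ_h E^{π,ν}[(Ũ_h − u_h)(s_h,a_h,b_h) − W̃_{h+1}(s_{h+1})]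
+ Σ_h E^{π,ν}[W̃_h(s_h) − (T_h^{π,ν̃}Ũ_h)(s_h)] + Σ_h H·E^{π,ν}[‖(ν̃_h − ν_h)(·|s_h)‖₁]`. -/
theorem performance_difference_QSE
    {S A B : Type} [Fintype S] [Fintype A] [Fintype B]
    [Nonempty S] [Nonempty A] [Nonempty B]
    (H : ℕ) (hH : 1 ≤ H) (η γ : ℝ) (hη : 0 < η) (hγ0 : 0 ≤ γ) (hγ1 : γ ≤ 1)
    (rho0 : S → ℝ) (hrho0 : ∀ s, 0 ≤ rho0 s) (hrho1 : ∑ s, rho0 s = 1)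
    (P : ℕ → S → A → B → S → ℝ)
    (hP0 : ∀ h < H, ∀ s a b s', 0 ≤ P h s a b s')
    (hP1 : ∀ h < H, ∀ s a b, ∑ s', P h s a b s' = 1)
    (u : ℕ → S → A → B → ℝ) (hu : ∀ h < H, ∀ s a b, u h s a b ∈ Set.Icc (0 : ℝ) 1)
    (r : ℕ → S → A → B → ℝ) (hr : ∀ h < H, ∀ s a b, r h s a b ∈ Set.Icc (0 : ℝ) 1)
    (pol : ℕ → S → B → A → ℝ)
    (hpol0 : ∀ h < H, ∀ s b a, 0 ≤ pol h s b a)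
    (hpol1 : ∀ h < H, ∀ s b, ∑ a, pol h s b a = 1)
    -- the arbitrary follower policies ν̃_h : S → Δ(B)
    (nt : ℕ → S → B → ℝ)
    (hnt0 : ∀ h < H, ∀ s b, 0 ≤ nt h s b)
    (hnt1 : ∀ h < H, ∀ s, ∑ b, nt h s b = 1)
    -- the arbitrary estimates Ũ_h, W̃_h
    (Ut : ℕ → S → A → B → ℝ)
    (hUt : ∀ h < H, ∀ s a b, |Ut h s a b| ≤ (H : ℝ))
    (hUend : ∀ s a b, Ut H s a b = 0)
    (Wt : ℕ → S → ℝ) (hWend : ∀ s, Wt H s = 0) :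
    (∑ s, rho0 s * Top pol nt 0 (Ut 0) s) - Jval η γ H rho0 pol r P u ≤
      (∑ h ∈ Finset.range H, ∑ s, ∑ b, ∑ a, ∑ s',
        margS rho0 pol (qr η γ H pol r P) P h s * qr η γ H pol r P h s b *
          pol h s b a * P h s a b s' *
          ((Ut h s a b - u h s a b) - Top pol nt (h + 1) (Ut (h + 1)) s')) +
      (∑ h ∈ Finset.range H, (H : ℝ) * ∑ s,
        margS rho0 pol (qr η γ H pol r P) P h s *
          ∑ b, |nt h s b - qr η γ H pol r P h s b|)
    ∧
    (∑ s, rho0 s * Wt 0 s) - Jval η γ H rho0 pol r P u ≤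
      (∑ h ∈ Finset.range H, ∑ s, ∑ b, ∑ a, ∑ s',
        margS rho0 pol (qr η γ H pol r P) P h s * qr η γ H pol r P h s b *
          pol h s b a * P h s a b s' *
          ((Ut h s a b - u h s a b) - Wt (h + 1) s')) +
      (∑ h ∈ Finset.range H, ∑ s,
        margS rho0 pol (qr η γ H pol r P) P h s *
          (Wt h s - Top pol nt h (Ut h) s)) +
      (∑ h ∈ Finset.range H, (H : ℝ) * ∑ s,
        margS rho0 pol (qr η γ H pol r P) P h s *
          ∑ b, |nt h s b - qr η γ H pol r P h s b|) := by
  constructor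
  · have h2 := pd_aux H η γ rho0 hrho0 P hP0 hP1 u r pol hpol0 hpol1 nt Ut hUt
      (fun h s => Top pol nt h (Ut h) s) (by intro s; simp [QSE.Top, hUend])
    simpa using h2
  · exact pd_aux H η γ rho0 hrho0 P hP0 hP1 u r pol hpol0 hpol1 nt Ut hUt Wt hWend
end
end

section
/- Response model error, myopic-form bound. Fix a leader policy π with quantal response ν^π, and suppose B_A > 0 satisfies ‖A_h^π‖_∞ ≤ B_A and ‖Ã_h‖_∞ ≤ B_A for all h = 1,…,H. For h ∈ [H] and (s,b) ∈ S×B define Δ̃_h⁽¹⁾(s,b) = (E_{s,b} − E_s)[ Σ_{l=h}^H γ^{l−h}·(Q̃_l − r_l^π − γ·P_l^π Ṽ_{l+1})(s_l,b_l) ], where (P_l^π Ṽ_{l+1})(s,b) = Σ_{s'} P_l^π(s'|s,b)·Ṽ_{l+1}(s'). Then Σ_{h=1}^H H·E^{π,ν^π}[ ‖(ν̃_h − ν_h^π)(·|s_h)‖₁ ] ≤ C⁽⁰⁾·Σ_{h=1}^H E^{π,ν^π}[ |Δ̃_h⁽¹⁾(s_h,b_h)| ] + C⁽¹⁾·Σ_{h=1}^H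 E^{π,ν^π}[ (Ã_h(s_h,b_h) − A_h^π(s_h,b_h))² ], where C⁽⁰⁾ = 2ηH and C⁽¹⁾ = η²·H·(1 + 4·eff_H(γ))·exp(2ηB_A). -/
/-!
Write `d = Ã − A^π`. Then `ν̃ = ν^π · exp (η d)`, so with `|d| ≤ 2 B_A` and the second-order
bound `exp x ≤ 1 + x + x² exp |x|`, `‖ν̃ − ν^π‖₁ = E_ν |exp (η d) − 1| ≤ η E_ν |d| + η² e^{2ηB_A} E_ν d²`.

Comparing the Bellman equations of `Q̃` and `Q^π` gives `d = Δ̃⁽¹⁾ − G_h + γ P^π G_{h+1}`, where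
`G_h(s) ≥ 0` is the expected discounted sum of `η⁻¹ KL(ν_l^π ‖ ν̃_l)` from step `h` on. Since
`E_ν γ P^π G_{h+1} ≤ G_h`, this yields `E_ν |d| ≤ E_ν |Δ̃⁽¹⁾| + 2 G_h`. Finally
`η⁻¹ KL(ν^π ‖ ν̃) = −E_ν d ≤ η e^{2ηB_A} E_ν d²` by the same bound on `exp` (as `E_ν exp (η d) = 1`),
and summing the discounted KL terms over `h` costs a factor `eff_H(γ)`.
-/

open Finset

noncomputable section

namespace QSE

variable {S A B : Type}

/-- Fuel-indexed conditional discounted cumulative value: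
`cumAux n s b = E[Σ_{l=H−n}^{H−1} γ^{l−(H−n)} X_l(s_l,b_l) | s_{H−n} = s, b_{H−n} = b]`. -/
def cumAux [Fintype S] [Fintype A] [Fintype B] (γ : ℝ) (H : ℕ)
    (pol : ℕ → S → B → A → ℝ) (nu : ℕ → S → B → ℝ)
    (P : ℕ → S → A → B → S → ℝ) (X : ℕ → S → B → ℝ) : ℕ → S → B → ℝ
  | 0, _, _ => 0
  | n + 1, s, b => X (H - (n + 1)) s b +
      γ * ∑ a, pol (H - (n + 1)) s b a * ∑ s', P (H - (n + 1)) s a b s' *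
          ∑ b', nu (H - n) s' b' * cumAux γ H pol nu P X n s' b'

/-- `cumSB h s b = E[Σ_{l=h}^{H−1} γ^{l−h} X_l(s_l,b_l) | s_h = s, b_h = b]`. -/
def cumSB [Fintype S] [Fintype A] [Fintype B] (γ : ℝ) (H : ℕ)
    (pol : ℕ → S → B → A → ℝ) (nu : ℕ → S → B → ℝ)
    (P : ℕ → S → A → B → S → ℝ) (X : ℕ → S → B → ℝ) (h : ℕ) (s : S) (b : B) : ℝ :=
  cumAux γ H pol nu P X (H - h) s b

/-- Estimated soft state value `Ṽ_h` derived from `Q̃` (with `Ṽ_H ≡ 0`). -/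
def vTil [Fintype B] (η : ℝ) (H : ℕ) (Qt : ℕ → S → B → ℝ) (h : ℕ) (s : S) : ℝ :=
  if h < H then η⁻¹ * Real.log (∑ b, Real.exp (η * Qt h s b)) else 0

/-- Estimated advantage `Ã_h = Q̃_h − Ṽ_h`. -/
def aTil [Fintype B] (η : ℝ) (H : ℕ) (Qt : ℕ → S → B → ℝ) (h : ℕ) (s : S) (b : B) : ℝ :=
  Qt h s b - vTil η H Qt h s

/-- Estimated quantal response `ν̃_h(b|s) = exp(η Ã_h(s,b))`. -/
def nuTil [Fintype B] (η : ℝ) (H : ℕ) (Qt : ℕ → S → B → ℝ) (h : ℕ) (s : S) (b : B) : ℝ :=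
  Real.exp (η * aTil η H Qt h s b)

/-- Follower Bellman residual `(Q̃_h − r_h^π − γ P_h^π Ṽ_{h+1})(s,b)`. -/
def bres [Fintype S] [Fintype A] [Fintype B] (η γ : ℝ) (H : ℕ)
    (pol : ℕ → S → B → A → ℝ) (r : ℕ → S → A → B → ℝ)
    (P : ℕ → S → A → B → S → ℝ) (Qt : ℕ → S → B → ℝ) (h : ℕ) (s : S) (b : B) : ℝ :=
  Qt h s b - rPol pol r h s b - γ * ∑ s', pPol pol P h s b s' * vTil η H Qt (h + 1) s'

/-- First-order quantal response error
`Δ̃_h⁽¹⁾(s,b) = (E_{s,b} − E_s)[Σ_{l=h}^{H−1} γ^{l−h}(Q̃_l − r_l^π − γ P_l^π Ṽ_{l+1})(s_l,b_l)]`. -/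
def del1 [Fintype S] [Fintype A] [Fintype B] (η γ : ℝ) (H : ℕ)
    (pol : ℕ → S → B → A → ℝ) (r : ℕ → S → A → B → ℝ)
    (P : ℕ → S → A → B → S → ℝ) (Qt : ℕ → S → B → ℝ) (h : ℕ) (s : S) (b : B) : ℝ :=
  cumSB γ H pol (qr η γ H pol r P) P (bres η γ H pol r P Qt) h s b -
    ∑ b', qr η γ H pol r P h s b' *
      cumSB γ H pol (qr η γ H pol r P) P (bres η γ H pol r P Qt) h s b'

/-- Geometric sum `eff_H(x) = Σ_{i<H} x^i`. -/
def effH (H : ℕ) (x : ℝ) : ℝ := ∑ i ∈ Finset.range H, x ^ i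

end QSE

open QSE

theorem exp_sub_one_sub_le_sq_mul_exp_abs (x : ℝ) :
    Real.exp x - 1 - x ≤ x ^ 2 * Real.exp |x| := by
  have h := Complex.norm_exp_sub_sum_le_norm_mul_exp (x : ℂ) 2
  norm_num [Finset.sum_range_succ] at h
  rw [show Complex.exp x - (1 + x) = ((Real.exp x - 1 - x : ℝ) : ℂ) by push_cast; ring,
    Complex.norm_real, Real.norm_eq_abs] at h
  exact (le_abs_self _).trans h

theorem exp_le_one_add_add_sq_mul_exp {x M : ℝ} (hx : |x| ≤ M) :
    Real.exp x ≤ 1 + x + x ^ 2 * Real.exp M := by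
  have := mul_le_mul_of_nonneg_left (Real.exp_le_exp.2 hx) (sq_nonneg x)
  linarith [exp_sub_one_sub_le_sq_mul_exp_abs x]

theorem abs_exp_sub_one_le_abs_add_sq_mul_exp {x M : ℝ} (hx : |x| ≤ M) :
    |Real.exp x - 1| ≤ |x| + x ^ 2 * Real.exp M := by
  have := mul_nonneg (sq_nonneg x) (Real.exp_pos M).le
  rw [abs_le]
  constructor
  · linarith [Real.add_one_le_exp x, neg_abs_le x]
  · linarith [exp_le_one_add_add_sq_mul_exp hx, le_abs_self x]

theorem abs_mul_le_mul_of_abs_le {η x M : ℝ} (hη : 0 ≤ η) (hx : |x| ≤ M) : |η * x| ≤ η * M := by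
  rw [abs_mul, abs_of_nonneg hη]
  exact mul_le_mul_of_nonneg_left hx hη

section Perturbation

variable {B : Type} [Fintype B] {η M : ℝ} {p d : B → ℝ}

theorem sum_exp_sub_log_sum_exp_eq_one [Nonempty B] (hη : η ≠ 0) (f : B → ℝ) :
    ∑ b, Real.exp (η * (f b - η⁻¹ * Real.log (∑ b', Real.exp (η * f b')))) = 1 := by
  have hpos : 0 < ∑ b', Real.exp (η * f b') := sum_pos (fun b _ => Real.exp_pos _) univ_nonempty
  simp only [mul_sub, ← mul_assoc, mul_inv_cancel₀ hη, one_mul, Real.exp_sub, Real.exp_log hpos,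
    ← sum_div, div_self hpos.ne']

theorem neg_sum_mul_nonneg_of_sum_mul_exp_eq_one (hη : 0 < η) (hp : ∀ b, 0 ≤ p b)
    (hp1 : ∑ b, p b = 1) (hpd : ∑ b, p b * Real.exp (η * d b) = 1) :
    0 ≤ -∑ b, p b * d b := by
  have : ∑ b, p b * (1 + η * d b) ≤ 1 := (sum_le_sum fun b _ =>
    mul_le_mul_of_nonneg_left (by linarith [Real.add_one_le_exp (η * d b)]) (hp b)).trans hpd.le
  simp only [mul_add, mul_one, sum_add_distrib, hp1, mul_left_comm _ η, ← mul_sum] at this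
  nlinarith

theorem neg_sum_mul_le_of_sum_mul_exp_eq_one (hη : 0 < η) (hp : ∀ b, 0 ≤ p b)
    (hp1 : ∑ b, p b = 1) (hpd : ∑ b, p b * Real.exp (η * d b) = 1) (hd : ∀ b, |d b| ≤ M) :
    -∑ b, p b * d b ≤ η * Real.exp (η * M) * ∑ b, p b * d b ^ 2 := by
  have : 1 ≤ ∑ b, p b * (1 + η * d b + (η * d b) ^ 2 * Real.exp (η * M)) :=
    hpd.symm.trans_le <| sum_le_sum fun b _ => mul_le_mul_of_nonneg_left
      (exp_le_one_add_add_sq_mul_exp (abs_mul_le_mul_of_abs_le hη.le (hd b))) (hp b)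
  have hsum : ∑ b, p b * (1 + η * d b + (η * d b) ^ 2 * Real.exp (η * M)) =
      1 + η * ∑ b, p b * d b + η * (η * Real.exp (η * M) * ∑ b, p b * d b ^ 2) := by
    have hb : ∀ b, p b * (1 + η * d b + (η * d b) ^ 2 * Real.exp (η * M)) =
        p b + η * (p b * d b) + η * (η * Real.exp (η * M) * (p b * d b ^ 2)) := fun b => by ring
    simp only [hb, sum_add_distrib, hp1, ← mul_sum]
  nlinarith

theorem sum_abs_mul_exp_sub_le (hη : 0 ≤ η) (hp : ∀ b, 0 ≤ p b) (hd : ∀ b, |d b| ≤ M) :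
    ∑ b, |p b * Real.exp (η * d b) - p b| ≤
      η * ∑ b, p b * |d b| + η ^ 2 * Real.exp (η * M) * ∑ b, p b * d b ^ 2 := by
  simp only [mul_sum, ← sum_add_distrib]
  refine sum_le_sum fun b _ => ?_
  rw [← mul_sub_one, abs_mul, abs_of_nonneg (hp b)]
  have := abs_exp_sub_one_le_abs_add_sq_mul_exp (abs_mul_le_mul_of_abs_le hη (hd b))
  rw [abs_mul, abs_of_nonneg hη] at this
  nlinarith [hp b]

end Perturbation

theorem effH_nonneg {γ : ℝ} (hγ : 0 ≤ γ) (H : ℕ) : 0 ≤ effH H γ :=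
  sum_nonneg fun i _ => pow_nonneg hγ i

theorem sum_range_le_effH_mul_sum_range {γ : ℝ} (hγ : 0 ≤ γ) :
    ∀ {H : ℕ} {x y : ℕ → ℝ}, (∀ h < H, 0 ≤ y h) → (∀ h < H, x h = y h + γ * x (h + 1)) →
      x H = 0 → ∑ h ∈ range H, x h ≤ effH H γ * ∑ h ∈ range H, y h
  | 0, _, _, _, _, _ => by simp [effH]
  | H + 1, x, y, hy, hrec, hx => by
    have ih : ∑ h ∈ range H, x (h + 1) ≤ effH H γ * ∑ h ∈ range H, y (h + 1) :=
      sum_range_le_effH_mul_sum_range hγ (fun h hh => hy (h + 1) (by omega))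
        (fun h hh => hrec (h + 1) (by omega)) hx
    have hsplit : ∑ h ∈ range (H + 1), x h =
        ∑ h ∈ range (H + 1), y h + γ * ∑ h ∈ range H, x (h + 1) := by
      rw [sum_congr rfl fun h hh => hrec h (mem_range.1 hh), sum_add_distrib, ← mul_sum,
        sum_range_succ (fun h => x (h + 1)), hx, add_zero]
    have hshift : ∑ h ∈ range H, y (h + 1) ≤ ∑ h ∈ range (H + 1), y h := by
      rw [sum_range_succ']
      linarith [hy 0 (by omega)]
    have := mul_le_mul_of_nonneg_left
      (ih.trans (mul_le_mul_of_nonneg_left hshift (effH_nonneg hγ H))) hγ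
    rw [hsplit, effH, geom_sum_succ, ← effH]
    linarith

namespace QSE

section Basic

variable {S A B : Type} {H h : ℕ}

theorem sum_nuTil_eq_one [Fintype B] [Nonempty B] {η : ℝ} {Qt : ℕ → S → B → ℝ} (hη : η ≠ 0)
    (hh : h < H) (s : S) :
    ∑ b, nuTil η H Qt h s b = 1 := by
  simp only [nuTil, aTil, vTil, if_pos hh]
  exact sum_exp_sub_log_sum_exp_eq_one hη _

theorem sum_pPol_mul [Fintype S] [Fintype A] {pol : ℕ → S → B → A → ℝ}
    {P : ℕ → S → A → B → S → ℝ} (h : ℕ) (s : S) (b : B) (F : S → ℝ) :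
    ∑ s', pPol pol P h s b s' * F s' = ∑ a, pol h s b a * ∑ s', P h s a b s' * F s' := by
  simp only [pPol, sum_mul, mul_sum]
  rw [sum_comm]
  exact sum_congr rfl fun a _ => sum_congr rfl fun s' _ => by ring

theorem pPol_nonneg [Fintype A] {pol : ℕ → S → B → A → ℝ} {P : ℕ → S → A → B → S → ℝ}
    {s : S} {b : B} {s' : S} (hpol : ∀ a, 0 ≤ pol h s b a) (hP : ∀ a, 0 ≤ P h s a b s') :
    0 ≤ pPol pol P h s b s' :=
  sum_nonneg fun a _ => mul_nonneg (hpol a) (hP a)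

end Basic

section Model

variable {S A B : Type} [Fintype S] [Fintype A] [Fintype B]

def bresReturn (η γ : ℝ) (H : ℕ) (pol : ℕ → S → B → A → ℝ) (r : ℕ → S → A → B → ℝ)
    (P : ℕ → S → A → B → S → ℝ) (Qt : ℕ → S → B → ℝ) (h : ℕ) (s : S) (b : B) : ℝ :=
  cumSB γ H pol (qr η γ H pol r P) P (bres η γ H pol r P Qt) h s b

def advErr (η γ : ℝ) (H : ℕ) (pol : ℕ → S → B → A → ℝ) (r : ℕ → S → A → B → ℝ)
    (P : ℕ → S → A → B → S → ℝ) (Qt : ℕ → S → B → ℝ) (h : ℕ) (s : S) (b : B) : ℝ :=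
  aTil η H Qt h s b - softA η γ H pol r P h s b

/-- `η * klTerm h s = KL(ν_h^π(·|s) ‖ ν̃_h(·|s))`, because `ν̃ = ν^π * exp (η * advErr)`. -/
def klTerm (η γ : ℝ) (H : ℕ) (pol : ℕ → S → B → A → ℝ) (r : ℕ → S → A → B → ℝ)
    (P : ℕ → S → A → B → S → ℝ) (Qt : ℕ → S → B → ℝ) (h : ℕ) (s : S) : ℝ :=
  -∑ b, qr η γ H pol r P h s b * advErr η γ H pol r P Qt h s b

/-- By `klReturn_eq`, the expected discounted sum of the `klTerm`s from step `h` on. -/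
def klReturn (η γ : ℝ) (H : ℕ) (pol : ℕ → S → B → A → ℝ) (r : ℕ → S → A → B → ℝ)
    (P : ℕ → S → A → B → S → ℝ) (Qt : ℕ → S → B → ℝ) (h : ℕ) (s : S) : ℝ :=
  vTil η H Qt h s - softV η γ H pol r P h s -
    ∑ b, qr η γ H pol r P h s b * bresReturn η γ H pol r P Qt h s b

variable {η γ : ℝ} {H : ℕ} {pol : ℕ → S → B → A → ℝ} {r : ℕ → S → A → B → ℝ}
  {P : ℕ → S → A → B → S → ℝ} {Qt : ℕ → S → B → ℝ} {h : ℕ}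

local notation "ν" => qr η γ H pol r P

theorem softV_of_lt (hh : h < H) (s : S) :
    softV η γ H pol r P h s =
      η⁻¹ * Real.log (∑ b, Real.exp (η * softQ η γ H pol r P h s b)) := by
  obtain ⟨n, hn⟩ : ∃ n, H - h = n + 1 := ⟨H - h - 1, by omega⟩
  rw [softV, hn]
  simp only [vAux, show H - (n + 1) = h by omega, softQ, softV, show H - (h + 1) = n by omega]

theorem softV_self (s : S) : softV η γ H pol r P H s = 0 := by
  simp [softV, vAux]

theorem qr_nonneg (h : ℕ) (s : S) (b : B) : 0 ≤ ν h s b :=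
  (Real.exp_pos _).le

theorem sum_qr_eq_one [Nonempty B] (hη : η ≠ 0) (hh : h < H) (s : S) : ∑ b, ν h s b = 1 := by
  simp only [qr, softA, softV_of_lt hh]
  exact sum_exp_sub_log_sum_exp_eq_one hη _

theorem nuTil_eq_qr_mul_exp (h : ℕ) (s : S) (b : B) :
    nuTil η H Qt h s b = ν h s b * Real.exp (η * advErr η γ H pol r P Qt h s b) := by
  rw [nuTil, qr, advErr, ← Real.exp_add]
  ring_nf

theorem cumSB_of_lt (nu : ℕ → S → B → ℝ) (X : ℕ → S → B → ℝ) (hh : h < H) (s : S) (b : B) :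
    cumSB γ H pol nu P X h s b = X h s b + γ * ∑ a, pol h s b a * ∑ s', P h s a b s' *
      ∑ b', nu (h + 1) s' b' * cumSB γ H pol nu P X (h + 1) s' b' := by
  obtain ⟨n, hn⟩ : ∃ n, H - h = n + 1 := ⟨H - h - 1, by omega⟩
  rw [cumSB, hn]
  simp only [cumAux, show H - (n + 1) = h by omega, show H - n = h + 1 by omega, cumSB,
    show H - (h + 1) = n by omega]

theorem cumSB_self (nu : ℕ → S → B → ℝ) (X : ℕ → S → B → ℝ) (s : S) (b : B) :
    cumSB γ H pol nu P X H s b = 0 := by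
  simp [cumSB, cumAux]

theorem bresReturn_eq (hh : h < H) (s : S) (b : B) :
    bresReturn η γ H pol r P Qt h s b = Qt h s b - softQ η γ H pol r P h s b -
      γ * ∑ s', pPol pol P h s b s' * klReturn η γ H pol r P Qt (h + 1) s' := by
  have hnext : ∀ s', ∑ b', ν (h + 1) s' b' *
      cumSB γ H pol ν P (bres η γ H pol r P Qt) (h + 1) s' b' =
        vTil η H Qt (h + 1) s' - softV η γ H pol r P (h + 1) s' -
          klReturn η γ H pol r P Qt (h + 1) s' := fun s' => by
    simp only [klReturn, bresReturn]
    ring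
  rw [bresReturn, cumSB_of_lt _ _ hh, ← sum_pPol_mul]
  simp only [hnext, bres, softQ, mul_sub, sum_sub_distrib]
  ring

theorem advErr_eq (hh : h < H) (s : S) (b : B) :
    advErr η γ H pol r P Qt h s b = del1 η γ H pol r P Qt h s b -
      klReturn η γ H pol r P Qt h s +
        γ * ∑ s', pPol pol P h s b s' * klReturn η γ H pol r P Qt (h + 1) s' := by
  have hdel : del1 η γ H pol r P Qt h s b = bresReturn η γ H pol r P Qt h s b -
      ∑ b', ν h s b' * bresReturn η γ H pol r P Qt h s b' := rfl
  rw [hdel, klReturn, bresReturn_eq hh, advErr, aTil, softA]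
  ring

theorem klReturn_eq [Nonempty B] (hη : η ≠ 0) (hh : h < H) (s : S) :
    klReturn η γ H pol r P Qt h s = klTerm η γ H pol r P Qt h s +
      γ * ∑ b, ν h s b * ∑ s', pPol pol P h s b s' * klReturn η γ H pol r P Qt (h + 1) s' := by
  have hgap : vTil η H Qt h s - softV η γ H pol r P h s =
      ∑ b, ν h s b * (vTil η H Qt h s - softV η γ H pol r P h s) := by
    rw [← sum_mul, sum_qr_eq_one hη hh, one_mul]
  rw [klReturn, klTerm, hgap, mul_sum, ← sum_sub_distrib, ← sum_neg_distrib, ← sum_add_distrib]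
  refine sum_congr rfl fun b _ => ?_
  rw [bresReturn_eq hh, advErr, aTil, softA]
  ring

theorem klReturn_self (s : S) : klReturn η γ H pol r P Qt H s = 0 := by
  simp [klReturn, vTil, softV_self, bresReturn, cumSB_self]

theorem sum_qr_mul_exp_advErr_eq_one [Nonempty B] (hη : η ≠ 0) (hh : h < H) (s : S) :
    ∑ b, ν h s b * Real.exp (η * advErr η γ H pol r P Qt h s b) = 1 := by
  simp only [← nuTil_eq_qr_mul_exp]
  exact sum_nuTil_eq_one hη hh s

theorem klTerm_nonneg [Nonempty B] (hη : 0 < η) (hh : h < H) (s : S) :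
    0 ≤ klTerm η γ H pol r P Qt h s :=
  neg_sum_mul_nonneg_of_sum_mul_exp_eq_one hη (qr_nonneg h s) (sum_qr_eq_one hη.ne' hh s)
    (sum_qr_mul_exp_advErr_eq_one hη.ne' hh s)

theorem klTerm_le [Nonempty B] (hη : 0 < η) (hh : h < H) (s : S) {M : ℝ}
    (hd : ∀ b, |advErr η γ H pol r P Qt h s b| ≤ M) :
    klTerm η γ H pol r P Qt h s ≤
      η * Real.exp (η * M) * ∑ b, ν h s b * advErr η γ H pol r P Qt h s b ^ 2 :=
  neg_sum_mul_le_of_sum_mul_exp_eq_one hη (qr_nonneg h s) (sum_qr_eq_one hη.ne' hh s)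
    (sum_qr_mul_exp_advErr_eq_one hη.ne' hh s) hd

theorem klReturn_nonneg [Nonempty B] (hη : 0 < η) (hγ : 0 ≤ γ)
    (hpol0 : ∀ h < H, ∀ s b a, 0 ≤ pol h s b a) (hP0 : ∀ h < H, ∀ s a b s', 0 ≤ P h s a b s')
    (hh : h ≤ H) (s : S) : 0 ≤ klReturn η γ H pol r P Qt h s := by
  induction hh using Nat.decreasingInduction generalizing s with
  | self => rw [klReturn_self]
  | of_succ k hk ih =>
    rw [klReturn_eq hη.ne' hk]
    exact add_nonneg (klTerm_nonneg hη hk s) <| mul_nonneg hγ <| sum_nonneg fun b _ =>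
      mul_nonneg (qr_nonneg k s b) <| sum_nonneg fun s' _ =>
        mul_nonneg (pPol_nonneg (hpol0 k hk s b) (fun a => hP0 k hk s a b s')) (ih s')

theorem sum_qr_mul_abs_advErr_le [Nonempty B] (hη : 0 < η) (hγ : 0 ≤ γ)
    (hpol0 : ∀ h < H, ∀ s b a, 0 ≤ pol h s b a) (hP0 : ∀ h < H, ∀ s a b s', 0 ≤ P h s a b s')
    (hh : h < H) (s : S) :
    ∑ b, ν h s b * |advErr η γ H pol r P Qt h s b| ≤
      ∑ b, ν h s b * |del1 η γ H pol r P Qt h s b| + 2 * klReturn η γ H pol r P Qt h s := by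
  have hrec : klReturn η γ H pol r P Qt h s = _ := klReturn_eq hη.ne' hh s
  set G := klReturn η γ H pol r P Qt h s
  set G' := fun b => γ * ∑ s', pPol pol P h s b s' * klReturn η γ H pol r P Qt (h + 1) s'
  have hG : 0 ≤ G := klReturn_nonneg hη hγ hpol0 hP0 hh.le s
  have hG' : ∀ b, 0 ≤ G' b := fun b => mul_nonneg hγ <| sum_nonneg fun s' _ =>
    mul_nonneg (pPol_nonneg (hpol0 h hh s b) (fun a => hP0 h hh s a b s')) (klReturn_nonneg hη hγ hpol0 hP0 hh s')
  -- `advErr = del1 - G + G'` with `G, G' ≥ 0`, and `E_ν G' = G - klTerm ≤ G`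
  have hpt : ∀ b, |advErr η γ H pol r P Qt h s b| ≤
      |del1 η γ H pol r P Qt h s b| + (G' b + G) := fun b => by
    rw [advErr_eq hh, abs_le]
    constructor <;> linarith [le_abs_self (del1 η γ H pol r P Qt h s b),
      neg_abs_le (del1 η γ H pol r P Qt h s b), hG' b]
  have hkl : 0 ≤ klTerm η γ H pol r P Qt h s := klTerm_nonneg hη hh s
  have hmean : ∑ b, ν h s b * G' b = G - klTerm η γ H pol r P Qt h s := by
    simp only [G', mul_left_comm _ γ, ← mul_sum]
    linarith
  calc ∑ b, ν h s b * |advErr η γ H pol r P Qt h s b|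
      ≤ ∑ b, ν h s b * (|del1 η γ H pol r P Qt h s b| + (G' b + G)) :=
        sum_le_sum fun b _ => mul_le_mul_of_nonneg_left (hpt b) (qr_nonneg h s b)
    _ = ∑ b, ν h s b * |del1 η γ H pol r P Qt h s b| + (∑ b, ν h s b * G' b + G) := by
        simp only [mul_add, sum_add_distrib, ← sum_mul, sum_qr_eq_one hη.ne' hh, one_mul]
    _ ≤ _ := by linarith [hkl]

theorem sum_abs_nuTil_sub_qr_le [Nonempty B] (hη : 0 < η) (hγ : 0 ≤ γ)
    (hpol0 : ∀ h < H, ∀ s b a, 0 ≤ pol h s b a) (hP0 : ∀ h < H, ∀ s a b s', 0 ≤ P h s a b s')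
    (hh : h < H) (s : S) {M : ℝ} (hd : ∀ b, |advErr η γ H pol r P Qt h s b| ≤ M) :
    ∑ b, |nuTil η H Qt h s b - ν h s b| ≤
      η * ∑ b, ν h s b * |del1 η γ H pol r P Qt h s b| +
        2 * η * klReturn η γ H pol r P Qt h s +
        η ^ 2 * Real.exp (η * M) * ∑ b, ν h s b * advErr η γ H pol r P Qt h s b ^ 2 := by
  simp only [nuTil_eq_qr_mul_exp (γ := γ) (pol := pol) (r := r) (P := P)]
  have hexp : ∑ b, |ν h s b * Real.exp (η * advErr η γ H pol r P Qt h s b) - ν h s b| ≤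
      η * ∑ b, ν h s b * |advErr η γ H pol r P Qt h s b| +
        η ^ 2 * Real.exp (η * M) * ∑ b, ν h s b * advErr η γ H pol r P Qt h s b ^ 2 :=
    sum_abs_mul_exp_sub_le hη.le (qr_nonneg h s) hd
  have := mul_le_mul_of_nonneg_left
    (sum_qr_mul_abs_advErr_le (r := r) (Qt := Qt) hη hγ hpol0 hP0 hh s) hη.le
  linarith

end Model

section Expectation

variable {S A B : Type} [Fintype S] [Fintype A] [Fintype B] {η γ : ℝ} {H : ℕ}
  {rho0 : S → ℝ} {pol : ℕ → S → B → A → ℝ} {r : ℕ → S → A → B → ℝ}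
  {P : ℕ → S → A → B → S → ℝ} {Qt : ℕ → S → B → ℝ} {h : ℕ}

theorem margS_nonneg {nu : ℕ → S → B → ℝ} (hrho0 : ∀ s, 0 ≤ rho0 s)
    (hnu : ∀ h s b, 0 ≤ nu h s b) (hpol0 : ∀ h < H, ∀ s b a, 0 ≤ pol h s b a)
    (hP0 : ∀ h < H, ∀ s a b s', 0 ≤ P h s a b s') :
    ∀ h ≤ H, ∀ s, 0 ≤ margS rho0 pol nu P h s
  | 0, _, s => hrho0 s
  | h + 1, hh, s' => sum_nonneg fun s _ => sum_nonneg fun b _ => sum_nonneg fun a _ =>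
      mul_nonneg (mul_nonneg (mul_nonneg (margS_nonneg hrho0 hnu hpol0 hP0 h (by omega) s)
        (hnu h s b)) (hpol0 h (by omega) s b a)) (hP0 h (by omega) s a b s')

theorem sum_margS_succ_mul (nu : ℕ → S → B → ℝ) (h : ℕ) (F : S → ℝ) :
    ∑ s', margS rho0 pol nu P (h + 1) s' * F s' =
      ∑ s, margS rho0 pol nu P h s * ∑ b, nu h s b * ∑ s', pPol pol P h s b s' * F s' := by
  simp only [margS, pPol, sum_mul, mul_sum]
  rw [sum_comm]
  refine sum_congr rfl fun s _ => ?_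
  rw [sum_comm]
  refine sum_congr rfl fun b _ => ?_
  exact sum_congr rfl fun s' _ => sum_congr rfl fun a _ => by ring

local notation "ν" => qr η γ H pol r P
local notation "μ" => margS rho0 pol ν P

theorem sum_margS_mul_klReturn_eq [Nonempty B] (hη : η ≠ 0) (hh : h < H) :
    ∑ s, μ h s * klReturn η γ H pol r P Qt h s =
      ∑ s, μ h s * klTerm η γ H pol r P Qt h s +
        γ * ∑ s, μ (h + 1) s * klReturn η γ H pol r P Qt (h + 1) s := by
  rw [sum_margS_succ_mul, mul_sum, ← sum_add_distrib]
  refine sum_congr rfl fun s _ => ?_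
  rw [klReturn_eq hη hh]
  ring

theorem sum_range_sum_margS_mul_qr_mul_nonneg (hrho0 : ∀ s, 0 ≤ rho0 s)
    (hpol0 : ∀ h < H, ∀ s b a, 0 ≤ pol h s b a) (hP0 : ∀ h < H, ∀ s a b s', 0 ≤ P h s a b s')
    {f : ℕ → S → B → ℝ} (hf : ∀ h s b, 0 ≤ f h s b) :
    0 ≤ ∑ h ∈ range H, ∑ s, ∑ b, μ h s * ν h s b * f h s b :=
  sum_nonneg fun h hh => sum_nonneg fun s _ => sum_nonneg fun b _ => mul_nonneg (mul_nonneg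
    (margS_nonneg hrho0 (fun h s b => qr_nonneg h s b) hpol0 hP0 h (mem_range.1 hh).le s)
    (qr_nonneg h s b)) (hf h s b)

theorem sum_range_sum_margS_mul_klReturn_le [Nonempty B] (hη : 0 < η) (hγ : 0 ≤ γ)
    (hrho0 : ∀ s, 0 ≤ rho0 s) (hpol0 : ∀ h < H, ∀ s b a, 0 ≤ pol h s b a)
    (hP0 : ∀ h < H, ∀ s a b s', 0 ≤ P h s a b s') {M : ℝ}
    (hd : ∀ h < H, ∀ s b, |advErr η γ H pol r P Qt h s b| ≤ M) :
    ∑ h ∈ range H, ∑ s, μ h s * klReturn η γ H pol r P Qt h s ≤ effH H γ *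
      (η * Real.exp (η * M) *
        ∑ h ∈ range H, ∑ s, ∑ b, μ h s * ν h s b * advErr η γ H pol r P Qt h s b ^ 2) := by
  have hμ : ∀ h ≤ H, ∀ s, 0 ≤ μ h s := margS_nonneg hrho0 (fun h s b => qr_nonneg h s b) hpol0 hP0
  have hkl : ∀ h < H, ∑ s, μ h s * klTerm η γ H pol r P Qt h s ≤
      η * Real.exp (η * M) * ∑ s, ∑ b, μ h s * ν h s b * advErr η γ H pol r P Qt h s b ^ 2 :=
    fun h hh => calc
      _ ≤ ∑ s, μ h s * (η * Real.exp (η * M) *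
            ∑ b, ν h s b * advErr η γ H pol r P Qt h s b ^ 2) :=
        sum_le_sum fun s _ => mul_le_mul_of_nonneg_left (klTerm_le hη hh s (hd h hh s))
          (hμ h hh.le s)
      _ = _ := by simp only [mul_sum, mul_assoc, mul_left_comm]
  refine (sum_range_le_effH_mul_sum_range hγ
    (x := fun h => ∑ s, μ h s * klReturn η γ H pol r P Qt h s)
    (y := fun h => ∑ s, μ h s * klTerm η γ H pol r P Qt h s)
    (fun h hh => sum_nonneg fun s _ => mul_nonneg (hμ h hh.le s) (klTerm_nonneg hη hh s))
    (fun h hh => sum_margS_mul_klReturn_eq hη.ne' hh) (by simp [klReturn_self])).trans ?_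
  exact mul_le_mul_of_nonneg_left
    ((sum_le_sum fun h hh => hkl h (mem_range.1 hh)).trans_eq (mul_sum _ _ _).symm)
    (effH_nonneg hγ H)

theorem sum_range_sum_margS_mul_sum_abs_nuTil_sub_qr_le [Nonempty B] (hη : 0 < η) (hγ : 0 ≤ γ)
    (hrho0 : ∀ s, 0 ≤ rho0 s) (hpol0 : ∀ h < H, ∀ s b a, 0 ≤ pol h s b a)
    (hP0 : ∀ h < H, ∀ s a b s', 0 ≤ P h s a b s') {M : ℝ}
    (hd : ∀ h < H, ∀ s b, |advErr η γ H pol r P Qt h s b| ≤ M) :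
    ∑ h ∈ range H, ∑ s, μ h s * ∑ b, |nuTil η H Qt h s b - ν h s b| ≤
      η * ∑ h ∈ range H, ∑ s, ∑ b, μ h s * ν h s b * |del1 η γ H pol r P Qt h s b| +
        2 * η * ∑ h ∈ range H, ∑ s, μ h s * klReturn η γ H pol r P Qt h s +
        η ^ 2 * Real.exp (η * M) *
          ∑ h ∈ range H, ∑ s, ∑ b, μ h s * ν h s b * advErr η γ H pol r P Qt h s b ^ 2 := by
  have hstep : ∀ h < H, ∑ s, μ h s * ∑ b, |nuTil η H Qt h s b - ν h s b| ≤
      ∑ s, μ h s * (η * ∑ b, ν h s b * |del1 η γ H pol r P Qt h s b| +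
        2 * η * klReturn η γ H pol r P Qt h s +
        η ^ 2 * Real.exp (η * M) * ∑ b, ν h s b * advErr η γ H pol r P Qt h s b ^ 2) :=
    fun h hh => sum_le_sum fun s _ => mul_le_mul_of_nonneg_left
      (sum_abs_nuTil_sub_qr_le hη hγ hpol0 hP0 hh s (hd h hh s))
      (margS_nonneg hrho0 (fun h s b => qr_nonneg h s b) hpol0 hP0 h hh.le s)
  refine (sum_le_sum fun h hh => hstep h (mem_range.1 hh)).trans_eq ?_
  simp only [mul_add, sum_add_distrib, mul_sum, mul_assoc, mul_left_comm]

end Expectation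

end QSE

open QSE

theorem response_model_error_myopic_form_general
    {S A B : Type} [Fintype S] [Fintype A] [Fintype B]
    [Nonempty B]
    (H : ℕ) (η γ : ℝ) (hη : 0 < η) (hγ0 : 0 ≤ γ)
    (rho0 : S → ℝ) (hrho0 : ∀ s, 0 ≤ rho0 s)
    (P : ℕ → S → A → B → S → ℝ)
    (hP0 : ∀ h < H, ∀ s a b s', 0 ≤ P h s a b s')
    (r : ℕ → S → A → B → ℝ)
    (pol : ℕ → S → B → A → ℝ)
    (hpol0 : ∀ h < H, ∀ s b a, 0 ≤ pol h s b a)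
    -- the estimated action values Q̃_h
    (Qt : ℕ → S → B → ℝ)
    -- B_A bounds both the true and the estimated advantage functions
    (BA : ℝ)
    (hA : ∀ h < H, ∀ s b, |softA η γ H pol r P h s b| ≤ BA)
    (hAt : ∀ h < H, ∀ s b, |aTil η H Qt h s b| ≤ BA) :
    ∑ h ∈ Finset.range H, (H : ℝ) * ∑ s,
        margS rho0 pol (qr η γ H pol r P) P h s *
          ∑ b, |nuTil η H Qt h s b - qr η γ H pol r P h s b| ≤
      (2 * η * (H : ℝ)) *
        ∑ h ∈ Finset.range H, ∑ s, ∑ b,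
          margS rho0 pol (qr η γ H pol r P) P h s * qr η γ H pol r P h s b *
            |del1 η γ H pol r P Qt h s b| +
      (η ^ 2 * (H : ℝ) * (1 + 4 * effH H γ) * Real.exp (2 * η * BA)) *
        ∑ h ∈ Finset.range H, ∑ s, ∑ b,
          margS rho0 pol (qr η γ H pol r P) P h s * qr η γ H pol r P h s b *
            (aTil η H Qt h s b - softA η γ H pol r P h s b) ^ 2 := by
  have hd : ∀ h < H, ∀ s b, |advErr η γ H pol r P Qt h s b| ≤ 2 * BA := fun h hh s b =>
    (abs_sub _ _).trans (by linarith [hA h hh s b, hAt h hh s b])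
  have hL1 := sum_range_sum_margS_mul_sum_abs_nuTil_sub_qr_le hη hγ0 hrho0 hpol0 hP0 hd
  have hKL := sum_range_sum_margS_mul_klReturn_le hη hγ0 hrho0 hpol0 hP0 hd
  simp only [advErr] at hL1 hKL
  have hT1 : 0 ≤ ∑ h ∈ range H, ∑ s, ∑ b, margS rho0 pol (qr η γ H pol r P) P h s *
      qr η γ H pol r P h s b * |del1 η γ H pol r P Qt h s b| :=
    sum_range_sum_margS_mul_qr_mul_nonneg hrho0 hpol0 hP0 fun _ _ _ => abs_nonneg _
  have hT2 : 0 ≤ ∑ h ∈ range H, ∑ s, ∑ b, margS rho0 pol (qr η γ H pol r P) P h s *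
      qr η γ H pol r P h s b * (aTil η H Qt h s b - softA η γ H pol r P h s b) ^ 2 :=
    sum_range_sum_margS_mul_qr_mul_nonneg hrho0 hpol0 hP0 fun _ _ _ => sq_nonneg _
  have hH : (0 : ℝ) ≤ H := H.cast_nonneg
  have heff := effH_nonneg hγ0 H
  rw [← mul_sum, show 2 * η * BA = η * (2 * BA) by ring]
  have := mul_le_mul_of_nonneg_left hL1 hH
  have := mul_le_mul_of_nonneg_left hKL (by positivity : (0 : ℝ) ≤ 2 * η * H)
  have : 0 ≤ η * H * _ := mul_nonneg (by positivity) hT1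
  have : 0 ≤ η ^ 2 * H * Real.exp (η * (2 * BA)) * effH H γ * _ := mul_nonneg (by positivity) hT2
  linarith

/-- Response model error, myopic-form bound (steps 0-based: `h < H` corresponds to
`h+1 ∈ [H]` of the paper).  With `ν = ν^π` the quantal response of `π` and
`ν̃` the quantal response derived from the estimates `Q̃`:
`Σ_h H·E^{π,ν}[‖(ν̃_h − ν_h)(·|s_h)‖₁] ≤ C⁽⁰⁾ Σ_h E^{π,ν}[|Δ̃_h⁽¹⁾(s_h,b_h)|]
+ C⁽¹⁾ Σ_h E^{π,ν}[(Ã_h(s_h,b_h) − A_h^π(s_h,b_h))²]`,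
where `C⁽⁰⁾ = 2ηH` and `C⁽¹⁾ = η²H(1 + 4 eff_H(γ)) exp(2ηB_A)`. -/
theorem response_model_error_myopic_form
    {S A B : Type} [Fintype S] [Fintype A] [Fintype B]
    [Nonempty S] [Nonempty A] [Nonempty B]
    (H : ℕ) (hH : 1 ≤ H) (η γ : ℝ) (hη : 0 < η) (hγ0 : 0 ≤ γ) (hγ1 : γ ≤ 1)
    (rho0 : S → ℝ) (hrho0 : ∀ s, 0 ≤ rho0 s) (hrho1 : ∑ s, rho0 s = 1)
    (P : ℕ → S → A → B → S → ℝ)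
    (hP0 : ∀ h < H, ∀ s a b s', 0 ≤ P h s a b s')
    (hP1 : ∀ h < H, ∀ s a b, ∑ s', P h s a b s' = 1)
    (r : ℕ → S → A → B → ℝ) (hr : ∀ h < H, ∀ s a b, r h s a b ∈ Set.Icc (0 : ℝ) 1)
    (pol : ℕ → S → B → A → ℝ)
    (hpol0 : ∀ h < H, ∀ s b a, 0 ≤ pol h s b a)
    (hpol1 : ∀ h < H, ∀ s b, ∑ a, pol h s b a = 1)
    -- the estimated action values Q̃_h
    (Qt : ℕ → S → B → ℝ)
    -- B_A bounds both the true and the estimated advantage functions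
    (BA : ℝ) (hBA : 0 < BA)
    (hA : ∀ h < H, ∀ s b, |softA η γ H pol r P h s b| ≤ BA)
    (hAt : ∀ h < H, ∀ s b, |aTil η H Qt h s b| ≤ BA) :
    ∑ h ∈ Finset.range H, (H : ℝ) * ∑ s,
        margS rho0 pol (qr η γ H pol r P) P h s *
          ∑ b, |nuTil η H Qt h s b - qr η γ H pol r P h s b| ≤
      (2 * η * (H : ℝ)) *
        ∑ h ∈ Finset.range H, ∑ s, ∑ b,
          margS rho0 pol (qr η γ H pol r P) P h s * qr η γ H pol r P h s b *
            |del1 η γ H pol r P Qt h s b| +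
      (η ^ 2 * (H : ℝ) * (1 + 4 * effH H γ) * Real.exp (2 * η * BA)) *
        ∑ h ∈ Finset.range H, ∑ s, ∑ b,
          margS rho0 pol (qr η γ H pol r P) P h s * qr η γ H pol r P h s b *
            (aTil η H Qt h s b - softA η γ H pol r P h s b) ^ 2 :=
  response_model_error_myopic_form_general H η γ hη hγ0 rho0 hrho0 P hP0 r pol hpol0 Qt BA hA hAt
end
end

section
/- Response model error for a myopic follower. Let r, r̃ : B → ℝ and suppose B_A > 0 satisfies ‖A_r‖_∞ ≤ B_A and ‖A_{r̃}‖_∞ ≤ B_A. Write ν = ν_r and ν̃ = ν_{r̃}. Then D_TV(ν, ν̃) ≤ η·E_ν[ |(r̃ − r) − E_ν[r̃ − r]| ] + C⁽³⁾·E_ν[ ((r̃ − r) − E_ν[r̃ − r])² ], where C⁽³⁾ = (η²·exp(2ηB_A)/2)·(2 + ηB_A·exp(2ηB_A)). -/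
/-!
The quantal response `ν̃ = ν_{r̃}` is the exponential tilt `ν·e^x / E_ν[e^x]` of `ν = ν_r` by
`x = η·u`, where `u = (r̃ − r) − E_ν[r̃ − r]` is centred under `ν` (shifting the exponent by a
constant does not change the tilt). Put `S = E_ν[e^x] ≥ 1`. Then `ν − ν̃ = ν·(S − e^x)/S` with
`S − e^x = (S − 1) − x − (e^x − 1 − x)`, and `E_ν[e^x − 1 − x] = S − 1`, so
`2·D_TV(ν, ν̃) ≤ 2(S − 1)/S + E_ν|x|`. The log-likelihood ratio `log(ν̃/ν) = x − log S` equals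
`η(A_{r̃} − A_r)`, so it is bounded by `2ηB_A`; hence `|x| ≤ 2ηB_A + log S`, and the Taylor bound
`e^x − 1 − x ≤ x²·e^{|x|}` gives `(S − 1)/S ≤ e^{2ηB_A}·E_ν[x²]`.
-/

open Finset

noncomputable section

namespace QSE3

variable {B : Type*} [Fintype B]

/-- Soft value `V(Q) = η⁻¹ log Σ_b exp(η Q b)`. -/
def softVal (η : ℝ) (Q : B → ℝ) : ℝ := η⁻¹ * Real.log (∑ b, Real.exp (η * Q b))

/-- Advantage `A_Q(b) = Q b − V(Q)`. -/
def adv (η : ℝ) (Q : B → ℝ) (b : B) : ℝ := Q b - softVal η Q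

/-- Quantal response `ν_Q(b) = exp(η A_Q(b))`. -/
def qres (η : ℝ) (Q : B → ℝ) (b : B) : ℝ := Real.exp (η * adv η Q b)

/-- Total-variation distance between (densities of) distributions on `B`. -/
def dTV (p q : B → ℝ) : ℝ := (1 / 2) * ∑ b, |p b - q b|

open Real

theorem _root_.Real.abs_exp_sub_one_sub_le_sq_mul_exp_abs (x : ℝ) :
    |exp x - 1 - x| ≤ x ^ 2 * exp |x| := by
  have h := Complex.norm_exp_sub_sum_le_norm_mul_exp (x : ℂ) 2
  simp only [sum_range_succ, sum_range_zero] at h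
  norm_num at h
  rw [← Complex.ofReal_exp] at h
  rw [sub_sub, ← Real.norm_eq_abs]
  exact_mod_cast h

def expMean (p x : B → ℝ) : ℝ := ∑ b, p b * exp (x b)

def tilt (p x : B → ℝ) (b : B) : ℝ := p b * exp (x b) / expMean p x

section Tilt

variable {p x : B → ℝ}

theorem sum_mul_sub_mean_eq_zero (hp : ∑ b, p b = 1) (f : B → ℝ) :
    ∑ b, p b * (f b - ∑ b', p b' * f b') = 0 := by
  simp only [mul_sub, sum_sub_distrib, ← sum_mul, hp, one_mul, sub_self]

theorem expMean_sub_one (hp : ∑ b, p b = 1) (hx : ∑ b, p b * x b = 0) :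
    expMean p x - 1 = ∑ b, p b * (exp (x b) - 1 - x b) := by
  simp only [expMean, mul_sub, mul_one, sum_sub_distrib, hp, hx, sub_zero]

theorem one_le_expMean (hp0 : ∀ b, 0 ≤ p b) (hp : ∑ b, p b = 1) (hx : ∑ b, p b * x b = 0) :
    1 ≤ expMean p x := by
  rw [← sub_nonneg, expMean_sub_one hp hx]
  refine sum_nonneg fun b _ => mul_nonneg (hp0 b) ?_
  linarith [add_one_le_exp (x b)]

theorem tilt_add_const (p x : B → ℝ) (c : ℝ) : tilt p (fun b => x b + c) = tilt p x := by
  funext b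
  have hmul : expMean p (fun b => x b + c) = expMean p x * exp c := by
    simp only [expMean, exp_add, sum_mul, mul_assoc]
  rw [tilt, tilt, hmul, exp_add, ← mul_assoc, mul_div_mul_right _ _ (exp_pos c).ne']

theorem log_tilt_div {b : B} (hpb : p b ≠ 0) (hS : expMean p x ≠ 0) :
    log (tilt p x b / p b) = x b - log (expMean p x) := by
  rw [tilt, mul_div_assoc, mul_div_cancel_left₀ _ hpb, log_div (exp_pos _).ne' hS, log_exp]

theorem sum_abs_sub_tilt_le (hp0 : ∀ b, 0 ≤ p b) (hp : ∑ b, p b = 1)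
    (hx : ∑ b, p b * x b = 0) :
    ∑ b, |p b - tilt p x b| ≤ 2 * (expMean p x - 1) / expMean p x + ∑ b, p b * |x b| := by
  set S := expMean p x with hS_def
  have hS1 : 1 ≤ S := one_le_expMean hp0 hp hx
  have hS : 0 < S := one_pos.trans_le hS1
  have hpoint : ∀ b, |p b - tilt p x b| ≤
      (p b * ((S - 1) + |x b| + (exp (x b) - 1 - x b))) / S := by
    intro b
    have hrem : 0 ≤ exp (x b) - 1 - x b := by linarith [add_one_le_exp (x b)]
    have hsplit : p b - tilt p x b = p b * ((S - 1) - x b - (exp (x b) - 1 - x b)) / S := by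
      rw [tilt, ← hS_def]; field_simp; ring
    rw [hsplit, abs_div, abs_of_pos hS, abs_mul, abs_of_nonneg (hp0 b)]
    refine div_le_div_of_nonneg_right (mul_le_mul_of_nonneg_left ?_ (hp0 b)) hS.le
    calc |S - 1 - x b - (exp (x b) - 1 - x b)|
        ≤ |S - 1| + |x b| + |exp (x b) - 1 - x b| :=
          (abs_sub _ _).trans (add_le_add (abs_sub _ _) le_rfl)
      _ = (S - 1) + |x b| + (exp (x b) - 1 - x b) := by
        rw [abs_of_nonneg (sub_nonneg.2 hS1), abs_of_nonneg hrem]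
  have hsum : ∑ b, p b * ((S - 1) + |x b| + (exp (x b) - 1 - x b))
      = 2 * (S - 1) + ∑ b, p b * |x b| := by
    simp only [mul_add, sum_add_distrib, ← expMean_sub_one hp hx,
      ← sum_mul, hp]
    ring
  have hT1 : 0 ≤ ∑ b, p b * |x b| := sum_nonneg fun b _ => mul_nonneg (hp0 b) (abs_nonneg _)
  calc ∑ b, |p b - tilt p x b|
      ≤ (2 * (S - 1) + ∑ b, p b * |x b|) / S := by
        rw [← hsum, sum_div]; exact sum_le_sum fun b _ => hpoint b
    _ ≤ 2 * (S - 1) / S + ∑ b, p b * |x b| := by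
        rw [add_div]; gcongr; exact div_le_self hT1 hS1

theorem expMean_sub_one_div_le {M : ℝ} (hp0 : ∀ b, 0 < p b) (hp : ∑ b, p b = 1)
    (hx : ∑ b, p b * x b = 0) (hM : ∀ b, |log (tilt p x b / p b)| ≤ M) :
    (expMean p x - 1) / expMean p x ≤ exp M * ∑ b, p b * x b ^ 2 := by
  set S := expMean p x
  have hS1 : 1 ≤ S := one_le_expMean (fun b => (hp0 b).le) hp hx
  have hS : 0 < S := one_pos.trans_le hS1
  have hexp : ∀ b, exp |x b| ≤ exp M * S := by
    intro b
    have hratio := hM b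
    rw [log_tilt_div (hp0 b).ne' hS.ne'] at hratio
    have htri := abs_add_le (x b - log S) (log S)
    rw [sub_add_cancel, abs_of_nonneg (log_nonneg hS1)] at htri
    rw [← exp_log hS, ← exp_add]
    exact exp_le_exp.2 (by linarith)
  rw [div_le_iff₀ hS, expMean_sub_one hp hx, mul_sum, sum_mul]
  refine sum_le_sum fun b _ => ?_
  calc p b * (exp (x b) - 1 - x b)
      ≤ p b * (x b ^ 2 * exp |x b|) :=
        mul_le_mul_of_nonneg_left ((le_abs_self _).trans (abs_exp_sub_one_sub_le_sq_mul_exp_abs _))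
          (hp0 b).le
    _ ≤ p b * (x b ^ 2 * (exp M * S)) :=
        mul_le_mul_of_nonneg_left (mul_le_mul_of_nonneg_left (hexp b) (sq_nonneg _)) (hp0 b).le
    _ = exp M * (p b * x b ^ 2) * S := by ring

theorem dTV_tilt_le {u : B → ℝ} {η M : ℝ} (hη : 0 ≤ η) (hp0 : ∀ b, 0 < p b)
    (hp : ∑ b, p b = 1) (hu : ∑ b, p b * u b = 0)
    (hM : ∀ b, |log (tilt p (fun b => η * u b) b / p b)| ≤ M) :
    dTV p (tilt p (fun b => η * u b)) ≤
      η / 2 * ∑ b, p b * |u b| + η ^ 2 * exp M * ∑ b, p b * u b ^ 2 := by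
  have hx : ∑ b, p b * (η * u b) = 0 := by
    simp only [mul_left_comm _ η, ← mul_sum, hu, mul_zero]
  have hTV := sum_abs_sub_tilt_le (fun b => (hp0 b).le) hp hx
  have hS := expMean_sub_one_div_le hp0 hp hx hM
  simp only [abs_mul, abs_of_nonneg hη, mul_pow, mul_left_comm _ η, mul_left_comm _ (η ^ 2),
    ← mul_sum] at hTV hS
  rw [mul_div_assoc] at hTV
  rw [dTV]
  linarith

end Tilt

theorem log_qres_div_qres (η : ℝ) (Q Q' : B → ℝ) (b : B) :
    log (qres η Q' b / qres η Q b) = η * (adv η Q' b - adv η Q b) := by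
  rw [qres, qres, ← exp_sub, log_exp, mul_sub]

section QuantalResponse

variable [Nonempty B] {η : ℝ}

theorem sum_exp_mul_pos (η : ℝ) (Q : B → ℝ) : 0 < ∑ b, exp (η * Q b) :=
  sum_pos (fun _ _ => exp_pos _) univ_nonempty

theorem qres_eq_div (hη : η ≠ 0) (Q : B → ℝ) (b : B) :
    qres η Q b = exp (η * Q b) / ∑ b', exp (η * Q b') := by
  rw [qres, adv, softVal, mul_sub, ← mul_assoc, mul_inv_cancel₀ hη, one_mul, exp_sub,
    exp_log (sum_exp_mul_pos η Q)]

theorem sum_qres (hη : η ≠ 0) (Q : B → ℝ) : ∑ b, qres η Q b = 1 := by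
  simp only [qres_eq_div hη, ← sum_div, div_self (sum_exp_mul_pos η Q).ne']

theorem qres_eq_tilt (hη : η ≠ 0) (Q Q' : B → ℝ) :
    qres η Q' = tilt (qres η Q) (fun b => η * (Q' b - Q b)) := by
  have hshift : ∀ b, exp (η * Q b) / (∑ b', exp (η * Q b')) * exp (η * (Q' b - Q b))
      = exp (η * Q' b) / ∑ b', exp (η * Q b') := fun b => by
    rw [div_mul_eq_mul_div, ← exp_add]; ring_nf
  funext b
  simp only [tilt, expMean, qres_eq_div hη, hshift, ← sum_div]
  field_simp

end QuantalResponse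

theorem response_model_error_myopic_general
    {B : Type*} [Fintype B] [Nonempty B]
    (η : ℝ) (hη : 0 < η) (r rt : B → ℝ) (BA : ℝ)
    (hA : ∀ b, |adv η r b| ≤ BA) (hAt : ∀ b, |adv η rt b| ≤ BA) :
    dTV (qres η r) (qres η rt) ≤
      η * (∑ b, qres η r b * |(rt b - r b) - ∑ b', qres η r b' * (rt b' - r b')|) +
        (η ^ 2 * Real.exp (2 * η * BA) / 2) * (2 + η * BA * Real.exp (2 * η * BA)) *
          (∑ b, qres η r b * ((rt b - r b) - ∑ b', qres η r b' * (rt b' - r b')) ^ 2) := by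
  set ν := qres η r
  set m := ∑ b', ν b' * (rt b' - r b')
  have hν0 : ∀ b, 0 < ν b := fun b => exp_pos _
  have hν : ∑ b, ν b = 1 := sum_qres hη.ne' r
  have htilt : qres η rt = tilt ν (fun b => η * (rt b - r b - m)) := by
    rw [qres_eq_tilt hη.ne' r rt, ← tilt_add_const _ _ (-(η * m))]
    congr 1; funext b; ring
  have hratio : ∀ b, |log (tilt ν (fun b => η * (rt b - r b - m)) b / ν b)| ≤ 2 * η * BA := by
    intro b
    rw [← htilt, log_qres_div_qres, abs_mul, abs_of_pos hη]
    nlinarith [abs_sub (adv η rt b) (adv η r b), hA b, hAt b]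
  have key := dTV_tilt_le hη.le hν0 hν (sum_mul_sub_mean_eq_zero hν fun b => rt b - r b) hratio
  rw [← htilt] at key
  have hT1 : 0 ≤ ∑ b, ν b * |rt b - r b - m| :=
    sum_nonneg fun b _ => mul_nonneg (hν0 b).le (abs_nonneg _)
  have hT2 : 0 ≤ ∑ b, ν b * (rt b - r b - m) ^ 2 :=
    sum_nonneg fun b _ => mul_nonneg (hν0 b).le (sq_nonneg _)
  have hBA : 0 ≤ BA := (abs_nonneg _).trans (hA (Classical.arbitrary B))
  have hC : η ^ 2 * exp (2 * η * BA) ≤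
      η ^ 2 * exp (2 * η * BA) / 2 * (2 + η * BA * exp (2 * η * BA)) := by
    have : 0 ≤ η ^ 2 * exp (2 * η * BA) / 2 * (η * BA * exp (2 * η * BA)) := by positivity
    linarith
  linarith [mul_le_mul_of_nonneg_right hC hT2, mul_nonneg hη.le hT1]

/-- Response model error for a myopic follower: with `ν = ν_r`,
`D_TV(ν_r, ν_{r̃}) ≤ η·E_ν[|(r̃−r) − E_ν[r̃−r]|] + C⁽³⁾·E_ν[((r̃−r) − E_ν[r̃−r])²]`,
where `C⁽³⁾ = (η² exp(2ηB_A)/2)(2 + ηB_A exp(2ηB_A))`. -/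
theorem response_model_error_myopic
    {B : Type*} [Fintype B] [Nonempty B]
    (η : ℝ) (hη : 0 < η) (r rt : B → ℝ) (BA : ℝ) (hBA : 0 < BA)
    (hA : ∀ b, |adv η r b| ≤ BA) (hAt : ∀ b, |adv η rt b| ≤ BA) :
    dTV (qres η r) (qres η rt) ≤
      η * (∑ b, qres η r b * |(rt b - r b) - ∑ b', qres η r b' * (rt b' - r b')|) +
        (η ^ 2 * Real.exp (2 * η * BA) / 2) * (2 + η * BA * Real.exp (2 * η * BA)) *
          (∑ b, qres η r b * ((rt b - r b) - ∑ b', qres η r b' * (rt b' - r b')) ^ 2) :=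
  response_model_error_myopic_general η hη r rt BA hA hAt

end QSE3
end
end

section
/- KL-divergence upper bound between quantal responses. Let Q, Q̃ : B → ℝ with ν = ν_Q and ν̃ = ν_{Q̃}. Then KL(ν ‖ ν̃) ≤ η·Σ_{b∈B} (ν(b) − ν̃(b))·(Q(b) − Q̃(b)). -/
open Finset

noncomputable section

namespace QSE8

variable {B : Type*} [Fintype B]

/-- Soft value `V(Q) = η⁻¹ log Σ_b exp(η Q b)`. -/
def softVal (η : ℝ) (Q : B → ℝ) : ℝ := η⁻¹ * Real.log (∑ b, Real.exp (η * Q b))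

/-- Advantage `A_Q(b) = Q b − V(Q)`. -/
def adv (η : ℝ) (Q : B → ℝ) (b : B) : ℝ := Q b - softVal η Q

/-- Quantal response `ν_Q(b) = exp(η A_Q(b))`. -/
def qres (η : ℝ) (Q : B → ℝ) (b : B) : ℝ := Real.exp (η * adv η Q b)

/-- KL divergence `KL(p‖q) = Σ_b p(b) log(p(b)/q(b))` between (densities of)
distributions on `B`. -/
def klD (p q : B → ℝ) : ℝ := ∑ b, p b * Real.log (p b / q b)

lemma qres_pos (η : ℝ) (Q : B → ℝ) (b : B) : 0 < qres η Q b := Real.exp_pos _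

lemma sum_qres [Nonempty B] {η : ℝ} (hη : η ≠ 0) (Q : B → ℝ) :
    ∑ b, qres η Q b = 1 := by
  have hpos : 0 < ∑ b, Real.exp (η * Q b) :=
    Finset.sum_pos (fun b _ => Real.exp_pos _) univ_nonempty
  have h : ∀ b : B, qres η Q b = Real.exp (η * Q b) / (∑ b, Real.exp (η * Q b)) := by
    intro b
    rw [qres, adv, softVal, mul_sub, mul_inv_cancel_left₀ hη, Real.exp_sub,
      Real.exp_log hpos]
  rw [Finset.sum_congr rfl fun b _ => h b, ← Finset.sum_div, div_self hpos.ne']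

lemma klD_qres (η : ℝ) (Q Qt : B → ℝ) :
    klD (qres η Q) (qres η Qt)
      = ∑ b, qres η Q b * (η * adv η Q b - η * adv η Qt b) := by
  refine Finset.sum_congr rfl fun b _ => ?_
  rw [Real.log_div (qres_pos η Q b).ne' (qres_pos η Qt b).ne', qres, qres,
    Real.log_exp, Real.log_exp]

lemma klD_qres_nonneg [Nonempty B] {η : ℝ} (hη : η ≠ 0) (Q Qt : B → ℝ) :
    0 ≤ klD (qres η Q) (qres η Qt) := by
  have h : ∀ b : B, qres η Q b - qres η Qt b ≤ qres η Q b * Real.log (qres η Q b / qres η Qt b) := by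
    intro b
    have hp := qres_pos η Q b
    have hq := qres_pos η Qt b
    have hlog := Real.log_le_sub_one_of_pos (div_pos hq hp)
    have : qres η Q b * Real.log (qres η Qt b / qres η Q b)
        ≤ qres η Q b * (qres η Qt b / qres η Q b - 1) :=
      mul_le_mul_of_nonneg_left hlog hp.le
    rw [mul_sub, mul_one, mul_div_cancel₀ _ hp.ne'] at this
    rw [Real.log_div hp.ne' hq.ne']
    rw [Real.log_div hq.ne' hp.ne'] at this
    nlinarith
  have := Finset.sum_le_sum (fun b (_ : b ∈ univ) => h b)
  rwa [Finset.sum_sub_distrib, sum_qres hη, sum_qres hη, sub_self] at this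

/-- KL-divergence upper bound between quantal responses:
`KL(ν_Q ‖ ν_{Q̃}) ≤ η Σ_b (ν_Q(b) − ν_{Q̃}(b))(Q(b) − Q̃(b))`. -/
theorem kl_upper_bound_quantal
    {B : Type*} [Fintype B] [Nonempty B]
    (η : ℝ) (hη : 0 < η) (Q Qt : B → ℝ) :
    klD (qres η Q) (qres η Qt) ≤
      η * ∑ b, (qres η Q b - qres η Qt b) * (Q b - Qt b) := by
  have hη' : η ≠ 0 := hη.ne'
  have key : klD (qres η Q) (qres η Qt) + klD (qres η Qt) (qres η Q)
      = η * ∑ b, (qres η Q b - qres η Qt b) * (Q b - Qt b) := by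
    rw [klD_qres, klD_qres, ← Finset.sum_add_distrib, Finset.mul_sum]
    have hsum : ∑ b, (qres η Q b - qres η Qt b) = 0 := by
      rw [Finset.sum_sub_distrib, sum_qres hη', sum_qres hη', sub_self]
    have expand : ∀ b : B,
        qres η Q b * (η * adv η Q b - η * adv η Qt b)
          + qres η Qt b * (η * adv η Qt b - η * adv η Q b)
        = η * ((qres η Q b - qres η Qt b) * (Q b - Qt b))
          - η * (softVal η Q - softVal η Qt) * (qres η Q b - qres η Qt b) := by
      intro b; simp only [adv]; ring
    rw [Finset.sum_congr rfl fun b _ => expand b, Finset.sum_sub_distrib,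
      ← Finset.mul_sum, ← Finset.mul_sum, hsum, mul_zero, sub_zero]
  linarith [klD_qres_nonneg hη' Qt Q (B := B)]

end QSE8
end
end

section
/- Comparison of softmax covariance quadratic forms. Let Q, Q̃ : B → ℝ with ν = ν_Q, ν̃ = ν_{Q̃}, and suppose B_A > 0 satisfies ‖A_Q‖_∞ ≤ B_A and ‖A_{Q̃}‖_∞ ≤ B_A. Then for every g : B → ℝ: exp(−2ηB_A)·Var_ν[g] ≤ Var_{ν̃}[g] ≤ exp(2ηB_A)·Var_ν[g]. Equivalently, with the matrices H = diag(ν̃) − ν̃ν̃ᵀ and L = diag(ν) − ννᵀ (indexed by B), exp(2ηB_A)·gᵀLg ≥ gᵀHg ≥ exp(−2ηB_A)·gᵀLg for every vector g ∈ ℝ^B. -/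
open Finset

noncomputable section

namespace QSE9

variable {B : Type*} [Fintype B]

/-- Soft value `V(Q) = η⁻¹ log Σ_b exp(η Q b)`. -/
def softVal (η : ℝ) (Q : B → ℝ) : ℝ := η⁻¹ * Real.log (∑ b, Real.exp (η * Q b))

/-- Advantage `A_Q(b) = Q b − V(Q)`. -/
def adv (η : ℝ) (Q : B → ℝ) (b : B) : ℝ := Q b - softVal η Q

/-- Quantal response `ν_Q(b) = exp(η A_Q(b))`. -/
def qres (η : ℝ) (Q : B → ℝ) (b : B) : ℝ := Real.exp (η * adv η Q b)

/-- Expectation `E_p[f] = Σ_b p(b) f(b)`. -/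
def expec (p f : B → ℝ) : ℝ := ∑ b, p b * f b

/-- Variance `Var_p[f] = E_p[(f − E_p[f])²]`. -/
def varD (p f : B → ℝ) : ℝ := ∑ b, p b * (f b - expec p f) ^ 2

lemma qres_sum_one [Nonempty B] (η : ℝ) (hη : 0 < η) (Q : B → ℝ) :
    ∑ b, qres η Q b = 1 := by
  have hS : 0 < ∑ b, Real.exp (η * Q b) :=
    Finset.sum_pos (fun b _ => Real.exp_pos _) Finset.univ_nonempty
  have : ∀ b, qres η Q b = Real.exp (η * Q b) / (∑ b', Real.exp (η * Q b')) := by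
    intro b
    rw [qres, adv, softVal, mul_sub, mul_inv_cancel_left₀ hη.ne', Real.exp_sub,
      Real.exp_log hS]
  rw [Finset.sum_congr rfl (fun b _ => this b), ← Finset.sum_div, div_self hS.ne']

lemma qres_nonneg (η : ℝ) (Q : B → ℝ) (b : B) : 0 ≤ qres η Q b :=
  (Real.exp_pos _).le

lemma sum_sq_shift (p g : B → ℝ) (c : ℝ) :
    ∑ b, p b * (g b - c) ^ 2 =
      (∑ b, p b * g b ^ 2) - 2 * c * (∑ b, p b * g b) + c ^ 2 * (∑ b, p b) := by
  rw [Finset.mul_sum, Finset.mul_sum, ← Finset.sum_sub_distrib, ← Finset.sum_add_distrib]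
  exact Finset.sum_congr rfl (fun b _ => by ring)

lemma varD_le (p g : B → ℝ) (hp1 : ∑ b, p b = 1) (c : ℝ) :
    varD p g ≤ ∑ b, p b * (g b - c) ^ 2 := by
  have h1 := sum_sq_shift p g c
  have h2 := sum_sq_shift p g (expec p g)
  have hm : expec p g = ∑ b, p b * g b := rfl
  rw [varD, h2, h1, hp1, ← hm]
  nlinarith [sq_nonneg (c - expec p g)]

lemma varD_comp [Nonempty B] (η : ℝ) (hη : 0 < η) (Q Qt : B → ℝ) (BA : ℝ)
    (hA : ∀ b, |adv η Q b| ≤ BA) (hAt : ∀ b, |adv η Qt b| ≤ BA) (g : B → ℝ) :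
    varD (qres η Qt) g ≤ Real.exp (2 * η * BA) * varD (qres η Q) g := by
  have key : ∀ b, qres η Qt b ≤ Real.exp (2 * η * BA) * qres η Q b := by
    intro b
    rw [qres, qres, ← Real.exp_add]
    apply Real.exp_le_exp.2
    have h1 := (abs_le.1 (hA b)).1
    have h2 := (abs_le.1 (hAt b)).2
    nlinarith
  calc varD (qres η Qt) g ≤ ∑ b, qres η Qt b * (g b - expec (qres η Q) g) ^ 2 :=
        varD_le _ _ (qres_sum_one η hη Qt) _
    _ ≤ ∑ b, Real.exp (2 * η * BA) * qres η Q b * (g b - expec (qres η Q) g) ^ 2 :=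
        Finset.sum_le_sum (fun b _ =>
          mul_le_mul_of_nonneg_right (key b) (sq_nonneg _))
    _ = Real.exp (2 * η * BA) * varD (qres η Q) g := by
        rw [varD, Finset.mul_sum]; exact Finset.sum_congr rfl (fun b _ => by ring)

/-- Comparison of softmax covariance quadratic forms: if `‖A_Q‖_∞ ≤ B_A` and
`‖A_{Q̃}‖_∞ ≤ B_A`, then for every `g : B → ℝ`,
`exp(−2ηB_A)·Var_ν[g] ≤ Var_ν̃[g] ≤ exp(2ηB_A)·Var_ν[g]` where `ν = ν_Q`, `ν̃ = ν_{Q̃}`. -/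
theorem softmax_variance_comparison
    {B : Type*} [Fintype B] [Nonempty B]
    (η : ℝ) (hη : 0 < η) (Q Qt : B → ℝ) (BA : ℝ) (hBA : 0 < BA)
    (hA : ∀ b, |adv η Q b| ≤ BA) (hAt : ∀ b, |adv η Qt b| ≤ BA) :
    ∀ g : B → ℝ,
      Real.exp (-(2 * η * BA)) * varD (qres η Q) g ≤ varD (qres η Qt) g ∧
      varD (qres η Qt) g ≤ Real.exp (2 * η * BA) * varD (qres η Q) g := by
  intro g
  refine ⟨?_, varD_comp η hη Q Qt BA hA hAt g⟩
  have h := varD_comp η hη Qt Q BA hAt hA g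
  have he : (0:ℝ) < Real.exp (2 * η * BA) := Real.exp_pos _
  rw [Real.exp_neg]
  rw [inv_mul_le_iff₀ he] at *
  linarith

end QSE9
end
end
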